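/- Let G be a group of exponent 4 in which every 2-generated subgroup is nilpotent of class at most 5 and [[a,b]^2, a] = 1 for all a, b. Then [a,b,a,w]^2 = 1 for all a, b ∈ G and w ∈ {a, b}; consequently γ₄(⟨a,b⟩)^2 = 1. -/

import Mathlib

/-- The commutator convention of the paper: `[x,y] = x⁻¹y⁻¹xy`. -/
def pcomm {G : Type*} [Group G] (x y : G) : G := x⁻¹ * y⁻¹ * x * y

/-- Left-normed iterated commutator `[x, _k y]` with `[x, _0 y] = x`. -/
def pcommIter {G : Type*} [Group G] (x y : G) : ℕ → G
  | 0 => x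
  | k + 1 => pcomm (pcommIter x y k) y

/-!
Write `γ n` for `lowerCentralSeries n` with Mathlib's indexing, so `γ 0 = G` and `γ n` is the
paper's `γ_{n+1}`. In a group of exponent 4, squaring moves an element one step down the lower
central series: `u ∈ γ (k + 1)` gives `u² ∈ γ (k + 2)`; at the bottom this is the identity
`(yx)⁴ = y⁴x⁴[x,y]⁶` in a group of class 2.

Now let `G` be generated by two elements and put `s = [g,h]²`. Modulo `γ 4`, `s` commutes with
`g` and `h` (by hypothesis) and with every square, and the squares generate a subgroup `K` such
that `G/K` is elementary abelian of rank at most two. So either `g` and `h` generate `G` modulo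
`K`, and `s` is central modulo `γ 4`, or they are dependent modulo `K`, and then already
`[g,h] ∈ γ 2`, `s ∈ γ 3`. Hence `[x², y] ∈ γ 4` for all `x ∈ γ 1`, and from `γ 2` on squaring
moves two steps down: squares of `γ 2` lie in `γ 4` and squares of `γ 3` in `γ 5`, which is
trivial in class at most 5.
-/

open scoped commutatorElement
open Subgroup

namespace ExponentFour

variable {G : Type*} [Group G]

local notation "γ" => Subgroup.lowerCentralSeries (⊤ : Subgroup G)

theorem commutatorElement_mem_comm {N : Subgroup G} {x y : G} : ⁅x, y⁆ ∈ N ↔ ⁅y, x⁆ ∈ N := by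
  rw [← inv_mem_iff, commutatorElement_inv]

def centralizerMod (N : Subgroup G) [N.Normal] (s : G) : Subgroup G :=
  (centralizer {(s : G ⧸ N)}).comap (QuotientGroup.mk' N)

section centralizerMod

variable {N : Subgroup G} [N.Normal] {s y : G}

theorem mem_centralizerMod : y ∈ centralizerMod N s ↔ ⁅s, y⁆ ∈ N := by
  rw [centralizerMod, mem_comap, mem_centralizer_singleton_iff, ← QuotientGroup.eq_one_iff,
    QuotientGroup.mk'_apply, eq_comm, ← commutatorElement_eq_one_iff_mul_comm]
  rfl

theorem mem_centralizerMod_comm : y ∈ centralizerMod N s ↔ s ∈ centralizerMod N y := by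
  rw [mem_centralizerMod, mem_centralizerMod, commutatorElement_mem_comm]

end centralizerMod

theorem commutatorElement_mem_lowerCentralSeries_succ {n : ℕ} {x : G} (hx : x ∈ γ n) (y : G) :
    ⁅x, y⁆ ∈ γ (n + 1) :=
  commutator_mem_commutator hx (mem_top y)

theorem commutatorElement_mem_lowerCentralSeries_succ' {n : ℕ} {y : G} (hy : y ∈ γ n) (x : G) :
    ⁅x, y⁆ ∈ γ (n + 1) :=
  commutatorElement_mem_comm.1 (commutatorElement_mem_lowerCentralSeries_succ hy x)

theorem commutatorElement_mem_lowerCentralSeries :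
    ∀ (i j : ℕ) {x y : G}, x ∈ γ i → y ∈ γ j → ⁅x, y⁆ ∈ γ (i + j + 1)
  | 0, j, x, _, _, hy => by
    simpa only [Nat.zero_add] using commutatorElement_mem_lowerCentralSeries_succ' hy x
  | i + 1, j, x, y, hx, hy => by
    suffices γ (i + 1) ≤ centralizerMod (γ (i + j + 2)) y by
      rw [show i + 1 + j + 1 = i + j + 2 by omega, commutatorElement_mem_comm]
      exact mem_centralizerMod.1 (this hx)
    rw [Subgroup.lowerCentralSeries_succ, commutator_le]
    rintro c hc z -
    rw [mem_centralizerMod]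
    have h₁ : ⁅z, ⁅y⁻¹, c⁻¹⁆⁆ ∈ γ (i + j + 2) :=
      commutatorElement_mem_lowerCentralSeries_succ' (commutatorElement_mem_comm.1
        (commutatorElement_mem_lowerCentralSeries i j (inv_mem hc) (inv_mem hy))) z
    have h₂ : ⁅c⁻¹, ⁅z⁻¹, y⁆⁆ ∈ γ (i + (j + 1) + 1) :=
      commutatorElement_mem_lowerCentralSeries i (j + 1) (inv_mem hc)
        (commutatorElement_mem_lowerCentralSeries_succ' hy z⁻¹)
    -- a rearranged Hall–Witt identity
    rw [show ⁅y, ⁅c, z⁆⁆ = (c * y) * ⁅z, ⁅y⁻¹, c⁻¹⁆⁆⁻¹ * (c * y)⁻¹ *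
        ((c * z) * ⁅c⁻¹, ⁅z⁻¹, y⁆⁆⁻¹ * (c * z)⁻¹) by group]
    exact mul_mem ((lowerCentralSeries_normal _ _).conj_mem _ (inv_mem h₁) _)
      ((lowerCentralSeries_normal _ _).conj_mem _ (inv_mem h₂) _)

theorem sq_mem_of_commutatorElement_sq_mem {k : ℕ} {Y : Subgroup G} (hY : γ (2 * k + 3) ≤ Y)
    (h : ∀ x ∈ γ k, ∀ y, ⁅x, y⁆ ^ 2 ∈ Y) : ∀ u ∈ γ (k + 1), u ^ 2 ∈ Y := by
  intro u hu
  induction hu using closure_induction with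
  | mem _ hgen =>
    obtain ⟨x, hx, y, -, rfl⟩ := hgen
    exact h x hx y
  | one => simp
  | mul u v hu hv pu pv =>
    have hvu : v⁻¹ * ⁅v⁻¹, u⁻¹⁆ * v ∈ γ (2 * k + 3) := by
      refine (lowerCentralSeries_normal _ _).conj_mem' _ ?_ v
      convert commutatorElement_mem_lowerCentralSeries (k + 1) (k + 1) (inv_mem hv) (inv_mem hu)
        using 2
      ring
    rw [show (u * v) ^ 2 = u ^ 2 * v ^ 2 * (v⁻¹ * ⁅v⁻¹, u⁻¹⁆ * v) by simp only [sq]; group]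
    exact mul_mem (mul_mem pu pv) (hY hvu)
  | inv u _ pu => simpa using inv_mem pu

theorem commutatorElement_sq_mem_of_sq_left {k n : ℕ} (hn : n ≤ 2 * k + 2) {x : G} (hx : x ∈ γ k)
    (y : G) (h : ⁅x ^ 2, y⁆ ∈ γ n) : ⁅x, y⁆ ^ 2 ∈ γ n := by
  have hxy : ⁅⁅x, y⁆⁻¹, x⁆ ∈ γ (k + 1 + k + 1) :=
    commutatorElement_mem_lowerCentralSeries (k + 1) k
      (inv_mem (commutatorElement_mem_lowerCentralSeries_succ hx y)) hx
  rw [show ⁅x, y⁆ ^ 2 = ⁅x ^ 2, y⁆ * (⁅x, y⁆⁻¹ * ⁅⁅x, y⁆⁻¹, x⁆⁻¹ * ⁅x, y⁆) by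
    simp only [sq]; group]
  exact mul_mem h ((lowerCentralSeries_normal _ _).conj_mem' _
    (inv_mem (Subgroup.lowerCentralSeries_antitone _ (by omega) hxy)) _)

section ExponentTwo

variable {Q : Type*} [Group Q] (hQ : ∀ q : Q, q ^ 2 = 1) {a b : Q} (hab : closure {a, b} = ⊤)
include hQ hab

theorem eq_one_or_eq_or_eq_or_eq_mul (q : Q) : q = 1 ∨ q = a ∨ q = b ∨ q = a * b := by
  have hinv : ∀ p : Q, p⁻¹ = p := fun p => inv_eq_of_mul_eq_one_right (by rw [← sq, hQ])
  let _ : CommGroup Q :=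
    { ‹Group Q› with mul_comm := fun p q => by rw [← hinv (p * q), mul_inv_rev, hinv, hinv] }
  obtain ⟨m, n, rfl⟩ := mem_closure_pair.1 (hab ▸ mem_top q)
  have hpow : ∀ (c : Q) (m : ℤ), c ^ m = 1 ∨ c ^ m = c := by
    intro c m
    obtain ⟨k, rfl | rfl⟩ := Int.even_or_odd' m <;> simp [zpow_add, zpow_mul, hQ]
  rcases hpow a m with h | h <;> rcases hpow b n with h' | h' <;> simp [h, h']

theorem eq_top_of_mem_of_mem_of_ne {P : Subgroup Q} {x y : Q} (hx : x ∈ P) (hy : y ∈ P)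
    (hx1 : x ≠ 1) (hy1 : y ≠ 1) (hxy : x ≠ y) : P = ⊤ := by
  rw [eq_top_iff, ← hab, closure_le, Set.insert_subset_iff, Set.singleton_subset_iff]
  rcases eq_one_or_eq_or_eq_or_eq_mul hQ hab x with rfl | rfl | rfl | rfl <;>
    rcases eq_one_or_eq_or_eq_or_eq_mul hQ hab y with rfl | rfl | rfl | rfl <;>
    simp_all [mul_mem_cancel_left, mul_mem_cancel_right]

end ExponentTwo

theorem pcomm_eq_commutatorElement (x y : G) : pcomm x y = ⁅x⁻¹, y⁻¹⁆ := by
  simp [pcomm, commutatorElement_def]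

theorem commutatorElement_sq_commutatorElement_eq_one
    (hsq : ∀ a b : G, pcomm ((pcomm a b) ^ 2) a = 1) (g h : G) : ⁅⁅g, h⁆ ^ 2, g⁆ = 1 := by
  have := hsq g⁻¹ h⁻¹
  rw [pcomm_eq_commutatorElement, pcomm_eq_commutatorElement, inv_inv, inv_inv,
    commutatorElement_eq_one_iff_commute, Commute.inv_left_iff] at this
  exact this.commutator_eq

theorem pcomm_mem_lowerCentralSeries_succ {n : ℕ} {x : G} (hx : x ∈ γ n) (y : G) :
    pcomm x y ∈ γ (n + 1) := by
  rw [pcomm_eq_commutatorElement]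
  exact commutatorElement_mem_lowerCentralSeries_succ (inv_mem hx) _

variable (G) in
def squareClosure : Subgroup G :=
  closure (Set.range fun g : G => g ^ 2)

theorem sq_mem_squareClosure (g : G) : g ^ 2 ∈ squareClosure G :=
  subset_closure ⟨g, rfl⟩

instance : (squareClosure G).Normal := by
  refine Subgroup.Normal.of_commutator_le (G := G) ?_
  rw [_root_.commutator_def, commutator_le]
  rintro x - y -
  rw [show ⁅x, y⁆ = x ^ 2 * (x⁻¹ * y) ^ 2 * (y ^ 2)⁻¹ by simp only [sq]; group]
  exact mul_mem (mul_mem (sq_mem_squareClosure x) (sq_mem_squareClosure _))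
    (inv_mem (sq_mem_squareClosure y))

section

variable (he : ∀ g : G, g ^ 4 = 1)
include he

theorem commutatorElement_sq_eq_one_of_commute (hc : ∀ p q r : G, Commute ⁅p, q⁆ r) (x y : G) :
    ⁅x, y⁆ ^ 2 = 1 := by
  have hxy : x * y = y * (x * ⁅x, y⁆) := by
    rw [show x * y = ⁅x, y⁆ * (y * x) by group, (hc x y _).eq, mul_assoc]
  have hc' : ∀ t, Commute ⁅x, y⁆ t := hc x y
  generalize ⁅x, y⁆ = c at hxy hc' ⊢
  have hxyt : ∀ t, x * (y * t) = y * (x * (c * t)) := fun t => by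
    rw [← mul_assoc, hxy]; simp only [mul_assoc]
  have hct : ∀ a t, c * (a * t) = a * (c * t) := fun a t => by
    rw [← mul_assoc, (hc' a).eq, mul_assoc]
  have h : (y * x) ^ 4 = y ^ 4 * (x ^ 4 * c ^ 6) := by
    simp only [pow_succ, pow_zero, one_mul, mul_assoc, hxyt, hct, (hc' x).eq]
  rw [he, he, he, one_mul, one_mul, show 6 = 2 + 4 by rfl, pow_add, he, mul_one] at h
  exact h.symm

theorem commutatorElement_sq_mem_lowerCentralSeries_two (g h : G) : ⁅g, h⁆ ^ 2 ∈ γ 2 := by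
  have hmk : ∀ p q : G, ((⁅p, q⁆ : G) : G ⧸ γ 2) = ⁅(p : G ⧸ γ 2), (q : G ⧸ γ 2)⁆ :=
    map_commutatorElement (QuotientGroup.mk' _)
  have hc : ∀ p q r : G ⧸ γ 2, Commute ⁅p, q⁆ r := by
    intro p q r
    induction p using QuotientGroup.induction_on
    induction q using QuotientGroup.induction_on
    induction r using QuotientGroup.induction_on
    rw [← commutatorElement_eq_one_iff_commute, ← hmk, ← hmk, QuotientGroup.eq_one_iff]
    exact commutatorElement_mem_lowerCentralSeries_succ
      (commutatorElement_mem_lowerCentralSeries_succ (mem_top _) _) _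
  have he' : ∀ q : G ⧸ γ 2, q ^ 4 = 1 := fun q => by
    induction q using QuotientGroup.induction_on
    rw [← QuotientGroup.mk_pow, he, QuotientGroup.mk_one]
  rw [← QuotientGroup.eq_one_iff, QuotientGroup.mk_pow, hmk]
  exact commutatorElement_sq_eq_one_of_commute he' hc _ _

theorem sq_mem_lowerCentralSeries_succ : ∀ (k : ℕ), ∀ u ∈ γ (k + 1), u ^ 2 ∈ γ (k + 2)
  | 0 => sq_mem_of_commutatorElement_sq_mem (Subgroup.lowerCentralSeries_antitone _ (by omega))
      fun x _ y => commutatorElement_sq_mem_lowerCentralSeries_two he x y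
  | k + 1 => sq_mem_of_commutatorElement_sq_mem (Subgroup.lowerCentralSeries_antitone _ (by omega))
      fun x hx y => commutatorElement_sq_mem_of_sq_left (by omega) hx y
        (commutatorElement_mem_lowerCentralSeries_succ (sq_mem_lowerCentralSeries_succ k x hx) y)

theorem squareClosure_le_centralizerMod {k : ℕ} {s : G} (hsk : s ∈ γ k) :
    squareClosure G ≤ centralizerMod (γ (k + 2)) s := by
  rw [squareClosure, closure_le]
  rintro _ ⟨t, rfl⟩
  have hst : ⁅s, t⁆ ∈ γ (k + 1) := commutatorElement_mem_lowerCentralSeries_succ hsk t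
  rw [SetLike.mem_coe, mem_centralizerMod,
    show ⁅s, t ^ 2⁆ = ⁅s, t⁆ ^ 2 * ⁅⁅s, t⁆⁻¹, t⁆ by simp only [sq]; group]
  exact mul_mem (sq_mem_lowerCentralSeries_succ he k _ hst)
    (commutatorElement_mem_lowerCentralSeries_succ (inv_mem hst) t)

theorem commutatorElement_mem_lowerCentralSeries_two_of_mem_squareClosure {g h : G}
    (hgh : g ∈ squareClosure G ∨ h ∈ squareClosure G ∨ g⁻¹ * h ∈ squareClosure G) :
    ⁅g, h⁆ ∈ γ 2 := by
  have key : ∀ {x m : G}, m ∈ squareClosure G → ⁅x, m⁆ ∈ γ 2 := fun hm =>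
    mem_centralizerMod.1 (squareClosure_le_centralizerMod he (mem_top _) hm)
  rcases hgh with hg | hh | hgh
  · exact commutatorElement_mem_comm.1 (key hg)
  · exact key hh
  · rw [show ⁅g, h⁆ = g * ⁅g, g⁻¹ * h⁆ * g⁻¹ by group]
    exact (lowerCentralSeries_normal _ _).conj_mem _ (key hgh) g

variable (hs : ∀ g h : G, ⁅⁅g, h⁆ ^ 2, g⁆ = 1) {A B : G} (hAB : closure {A, B} = ⊤)
include hs hAB

theorem centralizerMod_commutatorElement_sq_eq_top (g h : G) :
    centralizerMod (γ 4) (⁅g, h⁆ ^ 2) = ⊤ := by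
  set Z := centralizerMod (γ 4) (⁅g, h⁆ ^ 2)
  let π := QuotientGroup.mk' (squareClosure G)
  by_cases hdeg : π g = 1 ∨ π h = 1 ∨ π g = π h
  · have hgh : ⁅g, h⁆ ^ 2 ∈ γ 3 := sq_mem_lowerCentralSeries_succ he 1 _
      (commutatorElement_mem_lowerCentralSeries_two_of_mem_squareClosure he (by
        simpa only [π, QuotientGroup.mk'_apply, QuotientGroup.eq_one_iff, QuotientGroup.eq]
          using hdeg))
    exact eq_top_iff.2 fun y _ => mem_centralizerMod.2
      (commutatorElement_mem_lowerCentralSeries_succ hgh y)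
  push Not at hdeg
  have hgZ : g ∈ Z := mem_centralizerMod.2 (by rw [hs]; exact one_mem _)
  have hhZ : h ∈ Z := by
    rw [mem_centralizerMod, ← commutatorElement_inv h g, inv_pow, commutatorElement_inv_left,
      ← commutatorElement_inv (⁅h, g⁆ ^ 2), hs, inv_one, mul_one, inv_mul_cancel]
    exact one_mem _
  have hπ : ∀ q : G ⧸ squareClosure G, q ^ 2 = 1 := fun q => by
    induction q using QuotientGroup.induction_on
    rw [← QuotientGroup.mk_pow, QuotientGroup.eq_one_iff]
    exact sq_mem_squareClosure _
  have hπAB : closure {π A, π B} = ⊤ := by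
    rw [← Set.image_pair, ← MonoidHom.map_closure, hAB,
      map_top_of_surjective _ (QuotientGroup.mk'_surjective _)]
  have hmap : Z.map π = ⊤ := eq_top_of_mem_of_mem_of_ne hπ hπAB (mem_map_of_mem π hgZ)
    (mem_map_of_mem π hhZ) hdeg.1 hdeg.2.1 hdeg.2.2
  have hKZ : π.ker ≤ Z := by
    rw [QuotientGroup.ker_mk']
    exact squareClosure_le_centralizerMod he (commutatorElement_sq_mem_lowerCentralSeries_two he g h)
  rw [← comap_map_eq_self hKZ, hmap, comap_top]

theorem commutatorElement_sq_left_mem_lowerCentralSeries_four {x : G} (hx : x ∈ γ 1) (y : G) :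
    ⁅x ^ 2, y⁆ ∈ γ 4 := by
  suffices x ^ 2 ∈ centralizerMod (γ 4) y from
    commutatorElement_mem_comm.1 (mem_centralizerMod.1 this)
  refine sq_mem_of_commutatorElement_sq_mem (k := 0) (fun s hs3 => ?_) (fun g _ h => ?_) x hx
  · exact mem_centralizerMod.2 (commutatorElement_mem_lowerCentralSeries_succ' hs3 y)
  · rw [← mem_centralizerMod_comm, centralizerMod_commutatorElement_sq_eq_top he hs hAB]
    exact mem_top y

theorem sq_mem_lowerCentralSeries_four_of_mem_two : ∀ u ∈ γ 2, u ^ 2 ∈ γ 4 :=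
  sq_mem_of_commutatorElement_sq_mem (k := 1) (Subgroup.lowerCentralSeries_antitone _ (by omega))
    fun x hx y => commutatorElement_sq_mem_of_sq_left le_rfl hx y
      (commutatorElement_sq_left_mem_lowerCentralSeries_four he hs hAB hx y)

theorem sq_mem_lowerCentralSeries_five_of_mem_three : ∀ u ∈ γ 3, u ^ 2 ∈ γ 5 :=
  sq_mem_of_commutatorElement_sq_mem (k := 2) (Subgroup.lowerCentralSeries_antitone _ (by omega))
    fun x hx y => commutatorElement_sq_mem_of_sq_left (by omega) hx y
      (commutatorElement_mem_lowerCentralSeries_succ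
        (sq_mem_lowerCentralSeries_four_of_mem_two he hs hAB x hx) y)

theorem sq_eq_one_of_mem_lowerCentralSeries_three (hN : γ 5 = ⊥) {v : G} (hv : v ∈ γ 3) :
    v ^ 2 = 1 := by
  simpa only [hN, mem_bot] using sq_mem_lowerCentralSeries_five_of_mem_three he hs hAB v hv

end

end ExponentFour

open ExponentFour

/-- if `G` has exponent 4, every 2-generated subgroup is
nilpotent of class ≤ 5, and `[[a,b]^2,a] = 1` always holds, then
`[a,b,a,a]^2 = [a,b,a,b]^2 = 1`, and consequently `γ₄(⟨a,b⟩)^2 = 1`. -/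
theorem exponent_four_gamma4_squared {G : Type*} [Group G]
    (hexp : ∀ g : G, g ^ 4 = 1)
    (h2gen : ∀ a b : G,
      (⊤ : Subgroup ↥(Subgroup.closure ({a, b} : Set G))).lowerCentralSeries 5 = ⊥)
    (hsq : ∀ a b : G, pcomm ((pcomm a b) ^ 2) a = 1) :
    ∀ a b : G,
      (pcomm (pcomm (pcomm a b) a) a) ^ 2 = 1 ∧
      (pcomm (pcomm (pcomm a b) a) b) ^ 2 = 1 ∧
      ∀ g ∈ ((⊤ : Subgroup ↥(Subgroup.closure ({a, b} : Set G))).lowerCentralSeries 3).map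
          (Subgroup.closure ({a, b} : Set G)).subtype, g ^ 2 = 1 := by
  intro a b
  set H := Subgroup.closure ({a, b} : Set G)
  let A : H := ⟨a, subset_closure (by simp)⟩
  let B : H := ⟨b, subset_closure (by simp)⟩
  have hAB : Subgroup.closure {A, B} = ⊤ := by
    rw [← closure_closure_coe_preimage (k := {a, b})]
    congr 1
    ext
    simp [A, B, Subtype.ext_iff]
  have hsqH (v : H) (hv : v ∈ (⊤ : Subgroup H).lowerCentralSeries 3) : v ^ 2 = 1 :=
    sq_eq_one_of_mem_lowerCentralSeries_three (fun g => Subtype.ext (by simpa using hexp g))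
      (fun g h => Subtype.ext (by simpa [commutatorElement_def] using
        commutatorElement_sq_commutatorElement_eq_one hsq g h)) hAB (h2gen a b) hv
  have hmap : ∀ g ∈ ((⊤ : Subgroup H).lowerCentralSeries 3).map H.subtype, g ^ 2 = 1 := by
    rintro _ ⟨v, hv, rfl⟩
    rw [← map_pow, hsqH v hv, map_one]
  have h3 (w : H) : pcomm (pcomm (pcomm A B) A) w ∈ (⊤ : Subgroup H).lowerCentralSeries 3 :=
    pcomm_mem_lowerCentralSeries_succ
      (pcomm_mem_lowerCentralSeries_succ (pcomm_mem_lowerCentralSeries_succ (mem_top A) B) A) w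
  exact ⟨hmap _ ⟨_, h3 A, rfl⟩, hmap _ ⟨_, h3 B, rfl⟩, hmap⟩
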